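/- arXiv:2605.30691 — 5 statements merged into one kernel-verified Lean document; each statement's English description precedes it below -/
import Mathlib

section
/- Consider the discrete-time linear system x_{k+1} = A x_k + B u_k, y_k = C x_k + D u_k with A ∈ ℝ^{n×n}, B ∈ ℝ^{n×m}, C ∈ ℝ^{q×n}, D ∈ ℝ^{q×m}, and let C̃ ∈ ℝ^{q_m×n}, D̃ ∈ ℝ^{q_m×m} consist of a fixed subset of the rows of C and D (the measured outputs ỹ_k = C̃ x_k + D̃ u_k). Define the impulse responses g_0 = D, g_k = C A^{k−1} B for k ≥ 1 and g̃_0 = D̃, g̃_k = C̃ A^{k−1} B for k ≥ 1. Suppose the pair (A, C̃) is observable, and let p ≥ n, r ≥ n, p_f ≥ 1. Let inputs u_{−p+1}, …, u_{p_f} ∈ ℝ^m be given, let the state at time −p+1 satisfy x_{−p+1} ∈ Range([B, AB, …, A^{n−1}B]), and let the outputs y_k, ỹ_k for −p+1 ≤ k ≤ p_f be generated by the recursion. Stack U_p = (u_0ᵀ, u_{−1}ᵀ, …, u_{−p+1}ᵀ)ᵀ, Ỹ_p = (ỹ_0ᵀ, …, ỹ_{−p+1}ᵀ)ᵀ, U_f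 = (u_{p_f}ᵀ, …, u_1ᵀ)ᵀ, Y_f = (y_{p_f}ᵀ, …, y_1ᵀ)ᵀ. Then: (i) there exists U^e ∈ ℝ^{mr} such that Ỹ_p = T_p(g̃) U_p + T_1^{p,r}(g̃) U^e; and (ii) every U^e ∈ ℝ^{mr} satisfying Ỹ_p = T_p(g̃) U_p + T_1^{p,r}(g̃) U^e also satisfies Y_f = T_{p_f}(g) U_f + T_1^{p_f,p}(g) U_p + T_{p+1}^{p_f,r}(g) U^e. -/
open Matrix Filter

/-- Euclidean norm of a vector. -/
noncomputable def enorm {ι : Type*} [Fintype ι] (v : ι → ℝ) : ℝ :=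
  Real.sqrt (∑ i, v i ^ 2)

/-- Largest singular value: maximum Euclidean gain over unit vectors. -/
noncomputable def sigmaMax {ι κ : Type*} [Fintype ι] [Fintype κ]
    (M : Matrix ι κ ℝ) : ℝ :=
  sSup {y | ∃ x : κ → ℝ, _root_.enorm x = 1 ∧ y = _root_.enorm (M.mulVec x)}

/-- Smallest gain: minimum Euclidean gain over unit vectors. -/
noncomputable def sigmaMin {ι κ : Type*} [Fintype ι] [Fintype κ]
    (M : Matrix ι κ ℝ) : ℝ :=
  sInf {y | ∃ x : κ → ℝ, _root_.enorm x = 1 ∧ y = _root_.enorm (M.mulVec x)}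

/-- `P` is the Moore–Penrose pseudoinverse of `A`. -/
def IsMPInv {ι κ : Type*} [Fintype ι] [Fintype κ]
    (A : Matrix ι κ ℝ) (P : Matrix κ ι ℝ) : Prop :=
  A * P * A = A ∧ P * A * P = P ∧ (A * P)ᵀ = A * P ∧ (P * A)ᵀ = P * A

/-- Block-Toeplitz matrix `T_j^{l,w}(g)`: the (a,b) block (1-indexed) is
`g (j + l - a + b - 1)`. -/
def Tblk {q m : ℕ} (g : ℕ → Matrix (Fin q) (Fin m) ℝ) (j l w : ℕ) :
    Matrix (Fin l × Fin q) (Fin w × Fin m) ℝ :=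
  Matrix.of fun a b => g (j + l + (b.1 : ℕ) - ((a.1 : ℕ) + 1)) a.2 b.2

/-- Block upper-triangular Toeplitz matrix `T_p(g)`: the (a,b) block is `g (b - a)`
for `b ≥ a` and `0` otherwise. -/
def Ttri {q m : ℕ} (g : ℕ → Matrix (Fin q) (Fin m) ℝ) (p : ℕ) :
    Matrix (Fin p × Fin q) (Fin p × Fin m) ℝ :=
  Matrix.of fun a b =>
    if (a.1 : ℕ) ≤ (b.1 : ℕ) then g ((b.1 : ℕ) - (a.1 : ℕ)) a.2 b.2 else 0

/- ---------- auxiliary lemmas ---------- -/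

lemma mulVec_finsum {l n : ℕ} (M : Matrix (Fin l) (Fin n) ℝ) (s : Finset ℕ)
    (f : ℕ → Fin n → ℝ) :
    M.mulVec (∑ c ∈ s, f c) = ∑ c ∈ s, M.mulVec (f c) := by
  simp only [← Matrix.mulVecLin_apply, map_sum]

lemma tblk_mulVec {q m : ℕ} (g : ℕ → Matrix (Fin q) (Fin m) ℝ) (j l w : ℕ)
    (v : Fin w × Fin m → ℝ) (a : Fin l) (i : Fin q) :
    (Tblk g j l w).mulVec v (a, i)
      = ∑ b : Fin w, (g (j + l + (b : ℕ) - ((a : ℕ) + 1))).mulVec (fun s => v (b, s)) i := by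
  simp [Matrix.mulVec, dotProduct, Tblk, Fintype.sum_prod_type]

lemma ttri_mulVec {q m : ℕ} (g : ℕ → Matrix (Fin q) (Fin m) ℝ) (p : ℕ)
    (v : Fin p × Fin m → ℝ) (a : Fin p) (i : Fin q) :
    (Ttri g p).mulVec v (a, i)
      = ∑ b : Fin p, if (a : ℕ) ≤ (b : ℕ) then
          (g ((b : ℕ) - (a : ℕ))).mulVec (fun s => v (b, s)) i else 0 := by
  simp only [Matrix.mulVec, dotProduct, Ttri, Fintype.sum_prod_type, Matrix.of_apply]
  refine Finset.sum_congr rfl fun b _ => ?_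
  split_ifs <;> simp

/-- Row of a `Tblk` whose block indices are all ≥ 1: it factors through the
reachability-style sum. -/
lemma tblk_row {n mm qq : ℕ} (A : Matrix (Fin n) (Fin n) ℝ) (B : Matrix (Fin n) (Fin mm) ℝ)
    (Ct : Matrix (Fin qq) (Fin n) ℝ) (g : ℕ → Matrix (Fin qq) (Fin mm) ℝ)
    (hg : ∀ k : ℕ, 1 ≤ k → g k = Ct * A ^ (k - 1) * B)
    (j l w : ℕ) (hj : 1 ≤ j) (v : Fin w × Fin mm → ℝ) (a : Fin l) (i : Fin qq) :
    (Tblk g j l w).mulVec v (a, i)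
      = (Ct * A ^ (j + l - (a : ℕ) - 2)).mulVec
          (∑ b : Fin w, ((A ^ (b : ℕ)) * B).mulVec (fun s => v (b, s))) i := by
  rw [tblk_mulVec]
  have hR : (Ct * A ^ (j + l - (a : ℕ) - 2)).mulVec
      (∑ b : Fin w, ((A ^ (b : ℕ)) * B).mulVec (fun s => v (b, s)))
      = ∑ b : Fin w, ((Ct * A ^ (j + l - (a : ℕ) - 2)) * ((A ^ (b : ℕ)) * B)).mulVec
          (fun s => v (b, s)) := by
    rw [← Matrix.mulVecLin_apply, map_sum]
    simp [Matrix.mulVecLin_apply, Matrix.mulVec_mulVec]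
    simp only [Matrix.mul_assoc]
  rw [hR, Finset.sum_apply]
  refine Finset.sum_congr rfl fun b _ => ?_
  have ha := a.isLt
  have h1 : 1 ≤ j + l + (b : ℕ) - ((a : ℕ) + 1) := by omega
  rw [hg _ h1]
  have h2 : j + l + (b : ℕ) - ((a : ℕ) + 1) - 1 = (j + l - (a : ℕ) - 2) + (b : ℕ) := by omega
  rw [h2]
  have h3 : Ct * A ^ ((j + l - (a : ℕ) - 2) + (b : ℕ)) * B
      = Ct * A ^ (j + l - (a : ℕ) - 2) * (A ^ (b : ℕ) * B) := by
    simp only [pow_add, Matrix.mul_assoc]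
  rw [h3]

/-- Row of `Ttri` applied to a stacked (time-reversed) signal. -/
lemma ttri_row {n mm qq : ℕ} (A : Matrix (Fin n) (Fin n) ℝ) (B : Matrix (Fin n) (Fin mm) ℝ)
    (Ct : Matrix (Fin qq) (Fin n) ℝ) (D0 : Matrix (Fin qq) (Fin mm) ℝ)
    (g : ℕ → Matrix (Fin qq) (Fin mm) ℝ)
    (hg0 : g 0 = D0) (hg : ∀ k : ℕ, 1 ≤ k → g k = Ct * A ^ (k - 1) * B)
    (l : ℕ) (a : Fin l) (i : Fin qq) (w : ℤ → Fin mm → ℝ) (T : ℤ)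
    (v : Fin l × Fin mm → ℝ)
    (hv : ∀ bs : Fin l × Fin mm, v bs = w (T - ((bs.1 : ℕ) : ℤ)) bs.2) :
    (Ttri g l).mulVec v (a, i)
      = D0.mulVec (w (T - ((a : ℕ) : ℤ))) i
        + ∑ k ∈ Finset.range (l - 1 - (a : ℕ)),
            ((Ct * (A ^ k * B)).mulVec (w (T - ((a : ℕ) : ℤ) - 1 - (k : ℤ)))) i := by
  rw [ttri_mulVec]
  have hterm : ∀ b : Fin l,
      (if (a : ℕ) ≤ (b : ℕ) then (g ((b : ℕ) - (a : ℕ))).mulVec (fun s => v (b, s)) i else 0)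
      = (fun c : ℕ => if (a : ℕ) ≤ c then
          (g (c - (a : ℕ))).mulVec (w (T - (c : ℤ))) i else 0) (b : ℕ) := by
    intro b
    have : (fun s => v (b, s)) = w (T - ((b : ℕ) : ℤ)) := funext fun s => hv (b, s)
    rw [this]
  rw [Finset.sum_congr rfl (fun b _ => hterm b),
      Fin.sum_univ_eq_sum_range (fun c : ℕ => if (a : ℕ) ≤ c then
        (g (c - (a : ℕ))).mulVec (w (T - (c : ℤ))) i else 0) l, ← Finset.sum_filter]
  rw [show (Finset.range l).filter (fun c => (a : ℕ) ≤ c) = Finset.Ico (a : ℕ) l by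
        ext c; simp only [Finset.mem_filter, Finset.mem_Ico, Finset.mem_range]; omega]
  rw [Finset.sum_Ico_eq_sum_range]
  have ha := a.isLt
  rw [show l - (a : ℕ) = (l - 1 - (a : ℕ)) + 1 by omega, Finset.sum_range_succ']
  rw [add_comm]
  congr 1
  · rw [show (a : ℕ) + 0 - (a : ℕ) = 0 by omega, hg0,
       show T - ((((a : ℕ) + 0 : ℕ)) : ℤ) = T - ((a : ℕ) : ℤ) by push_cast; ring]
  · refine Finset.sum_congr rfl fun k hk => ?_
    have hk' := Finset.mem_range.mp hk
    rw [show (a : ℕ) + (k + 1) - (a : ℕ) = k + 1 by omega, hg _ (by omega),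
        Nat.add_sub_cancel,
        show T - ((((a : ℕ) + (k + 1) : ℕ)) : ℤ) = T - ((a : ℕ) : ℤ) - 1 - (k : ℤ) by
          push_cast; ring,
        Matrix.mul_assoc]

/-- Row of a `Tblk` with `j = 1` applied to a stacked (time-reversed) signal. -/
lemma tblk1_row {n mm qq : ℕ} (A : Matrix (Fin n) (Fin n) ℝ) (B : Matrix (Fin n) (Fin mm) ℝ)
    (Ct : Matrix (Fin qq) (Fin n) ℝ) (g : ℕ → Matrix (Fin qq) (Fin mm) ℝ)
    (hg : ∀ k : ℕ, 1 ≤ k → g k = Ct * A ^ (k - 1) * B)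
    (l w : ℕ) (a : Fin l) (i : Fin qq) (wseq : ℤ → Fin mm → ℝ) (T : ℤ)
    (v : Fin w × Fin mm → ℝ)
    (hv : ∀ bs : Fin w × Fin mm, v bs = wseq (T - ((bs.1 : ℕ) : ℤ)) bs.2) :
    (Tblk g 1 l w).mulVec v (a, i)
      = ∑ b ∈ Finset.range w,
          ((Ct * (A ^ (l - 1 - (a : ℕ) + b) * B)).mulVec (wseq (T - (b : ℤ)))) i := by
  rw [tblk_mulVec]
  have hterm : ∀ b : Fin w,
      (g (1 + l + (b : ℕ) - ((a : ℕ) + 1))).mulVec (fun s => v (b, s)) i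
      = (fun c : ℕ =>
          ((Ct * (A ^ (l - 1 - (a : ℕ) + c) * B)).mulVec (wseq (T - (c : ℤ)))) i) (b : ℕ) := by
    intro b
    have ha := a.isLt
    have h1 : 1 ≤ 1 + l + (b : ℕ) - ((a : ℕ) + 1) := by omega
    have hvb : (fun s => v (b, s)) = wseq (T - ((b : ℕ) : ℤ)) := funext fun s => hv (b, s)
    rw [hg _ h1, hvb, show 1 + l + (b : ℕ) - ((a : ℕ) + 1) - 1 = l - 1 - (a : ℕ) + (b : ℕ) by
          omega, Matrix.mul_assoc]
  rw [Finset.sum_congr rfl (fun b _ => hterm b),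
      Fin.sum_univ_eq_sum_range (fun c : ℕ =>
        ((Ct * (A ^ (l - 1 - (a : ℕ) + c) * B)).mulVec (wseq (T - (c : ℤ)))) i) w]

/-- exact finite-window prediction for a linear state-space system with
measured-output submatrices `C̃, D̃`: an equivalent input `U^e` fitting the past measured
data exists, and any such `U^e` exactly reproduces the future outputs. -/
theorem stmt1 {n m q qm : ℕ}
    (A : Matrix (Fin n) (Fin n) ℝ) (B : Matrix (Fin n) (Fin m) ℝ)
    (C : Matrix (Fin q) (Fin n) ℝ) (D : Matrix (Fin q) (Fin m) ℝ)
    (sel : Fin qm → Fin q) (hsel : Function.Injective sel)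
    (Ct : Matrix (Fin qm) (Fin n) ℝ) (Dt : Matrix (Fin qm) (Fin m) ℝ)
    (hCt : Ct = C.submatrix sel id) (hDt : Dt = D.submatrix sel id)
    (g : ℕ → Matrix (Fin q) (Fin m) ℝ)
    (hg0 : g 0 = D) (hg : ∀ k : ℕ, 1 ≤ k → g k = C * A ^ (k - 1) * B)
    (gt : ℕ → Matrix (Fin qm) (Fin m) ℝ)
    (hgt0 : gt 0 = Dt) (hgt : ∀ k : ℕ, 1 ≤ k → gt k = Ct * A ^ (k - 1) * B)
    (hobs : (Matrix.of fun (a : Fin n × Fin qm) (b : Fin n) =>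
      (Ct * A ^ (a.1 : ℕ)) a.2 b).rank = n)
    (p r pf : ℕ) (hp : n ≤ p) (hr : n ≤ r) (hpf : 1 ≤ pf)
    (u : ℤ → Fin m → ℝ) (x : ℤ → Fin n → ℝ)
    (hx0 : ∃ z : Fin n × Fin m → ℝ,
      x (-(p : ℤ) + 1) =
        (Matrix.of fun (a : Fin n) (b : Fin n × Fin m) =>
          (A ^ (b.1 : ℕ) * B) a b.2).mulVec z)
    (hrec : ∀ k : ℤ, -(p : ℤ) + 1 ≤ k → k < (pf : ℤ) →
      x (k + 1) = A.mulVec (x k) + B.mulVec (u k))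
    (y : ℤ → Fin q → ℝ) (yt : ℤ → Fin qm → ℝ)
    (hy : ∀ k : ℤ, -(p : ℤ) + 1 ≤ k → k ≤ (pf : ℤ) →
      y k = C.mulVec (x k) + D.mulVec (u k))
    (hyt : ∀ k : ℤ, -(p : ℤ) + 1 ≤ k → k ≤ (pf : ℤ) →
      yt k = Ct.mulVec (x k) + Dt.mulVec (u k))
    (Up : Fin p × Fin m → ℝ) (hUp : ∀ a, Up a = u (-((a.1 : ℕ) : ℤ)) a.2)
    (Yp : Fin p × Fin qm → ℝ) (hYp : ∀ a, Yp a = yt (-((a.1 : ℕ) : ℤ)) a.2)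
    (Uf : Fin pf × Fin m → ℝ) (hUf : ∀ a, Uf a = u ((pf : ℤ) - ((a.1 : ℕ) : ℤ)) a.2)
    (Yf : Fin pf × Fin q → ℝ) (hYf : ∀ a, Yf a = y ((pf : ℤ) - ((a.1 : ℕ) : ℤ)) a.2) :
    (∃ Ue : Fin r × Fin m → ℝ,
        Yp = (Ttri gt p).mulVec Up + (Tblk gt 1 p r).mulVec Ue) ∧
    (∀ Ue : Fin r × Fin m → ℝ,
        Yp = (Ttri gt p).mulVec Up + (Tblk gt 1 p r).mulVec Ue →
        Yf = (Ttri g pf).mulVec Uf + (Tblk g 1 pf p).mulVec Up +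
          (Tblk g (p + 1) pf r).mulVec Ue) := by
  -- the state-evolution formula
  have hstate : ∀ t : ℕ, (t : ℤ) ≤ (p : ℤ) - 1 + (pf : ℤ) →
      x (-(p : ℤ) + 1 + (t : ℤ)) = (A ^ t).mulVec (x (-(p : ℤ) + 1)) +
        ∑ c ∈ Finset.range t, ((A ^ (t - 1 - c)) * B).mulVec (u (-(p : ℤ) + 1 + (c : ℤ))) := by
    intro t
    induction t with
    | zero => intro _; simp
    | succ t ih =>
      intro ht
      have ht' : (t : ℤ) ≤ (p : ℤ) - 1 + (pf : ℤ) := by push_cast at ht ⊢; omega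
      have hlt : -(p : ℤ) + 1 + (t : ℤ) < (pf : ℤ) := by push_cast at ht; omega
      have hge : -(p : ℤ) + 1 ≤ -(p : ℤ) + 1 + (t : ℤ) := by omega
      have hx := hrec _ hge hlt
      rw [show (-(p:ℤ) + 1 + ((t + 1 : ℕ) : ℤ)) = (-(p:ℤ) + 1 + (t:ℤ)) + 1 by push_cast; ring,
        hx, ih ht', Matrix.mulVec_add, Matrix.mulVec_mulVec, ← pow_succ']
      have hsum : A.mulVec (∑ c ∈ Finset.range t,
          ((A ^ (t - 1 - c)) * B).mulVec (u (-(p:ℤ) + 1 + (c:ℤ))))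
          = ∑ c ∈ Finset.range t, ((A ^ (t - c)) * B).mulVec (u (-(p:ℤ) + 1 + (c:ℤ))) := by
        rw [← Matrix.mulVecLin_apply, map_sum]
        refine Finset.sum_congr rfl fun c hc => ?_
        have hti : t - c = (t - 1 - c) + 1 := by have := Finset.mem_range.mp hc; omega
        rw [Matrix.mulVecLin_apply, Matrix.mulVec_mulVec, hti, pow_succ']
        exact congrArg (fun M => M *ᵥ u (-(p:ℤ) + 1 + (c:ℤ))) (Matrix.mul_assoc A _ B).symm
      rw [hsum, Finset.sum_range_succ]
      simp only [Nat.add_sub_cancel, Nat.sub_self, pow_zero, Matrix.one_mul]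
      abel
  set x0 : Fin n → ℝ := x (-(p : ℤ) + 1) with hx0def
  -- the key "past-row" identity
  have hPastRow : ∀ (a : Fin p) (i : Fin qm),
      Yp (a, i) = (Ttri gt p).mulVec Up (a, i)
        + ((Ct * A ^ (p - 1 - (a : ℕ))).mulVec x0) i := by
    intro a i
    have ha := a.isLt
    have hxa : x (-((a : ℕ) : ℤ)) = (A ^ (p - 1 - (a : ℕ))).mulVec x0 +
        ∑ c ∈ Finset.range (p - 1 - (a : ℕ)),
          ((A ^ ((p - 1 - (a : ℕ)) - 1 - c)) * B).mulVec (u (-(p:ℤ) + 1 + (c : ℤ))) := by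
      have h := hstate (p - 1 - (a : ℕ)) (by omega)
      rwa [show -(p:ℤ) + 1 + (((p - 1 - (a : ℕ) : ℕ)) : ℤ) = -((a : ℕ) : ℤ) by omega] at h
    have hCsum : Ct.mulVec (∑ c ∈ Finset.range (p - 1 - (a : ℕ)),
          ((A ^ ((p - 1 - (a : ℕ)) - 1 - c)) * B).mulVec (u (-(p:ℤ) + 1 + (c : ℤ))))
        = ∑ c ∈ Finset.range (p - 1 - (a : ℕ)),
          (Ct * ((A ^ ((p - 1 - (a : ℕ)) - 1 - c)) * B)).mulVec (u (-(p:ℤ) + 1 + (c : ℤ))) := by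
      rw [mulVec_finsum]
      exact Finset.sum_congr rfl fun c _ => Matrix.mulVec_mulVec _ _ _
    have hT := ttri_row A B Ct Dt gt hgt0 hgt p a i u 0 Up
      (fun bs => by
        rw [hUp bs, show (0:ℤ) - ((bs.1 : ℕ) : ℤ) = -((bs.1 : ℕ) : ℤ) by ring])
    have hYpa : Yp (a, i) = yt (-((a : ℕ) : ℤ)) i := hYp (a, i)
    rw [hYpa, hyt _ (by omega) (by omega), Pi.add_apply, hxa, Matrix.mulVec_add, Pi.add_apply,
        Matrix.mulVec_mulVec, hCsum, Finset.sum_apply, hT]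
    have hsums : ∑ c ∈ Finset.range (p - 1 - (a : ℕ)),
          ((Ct * ((A ^ ((p - 1 - (a : ℕ)) - 1 - c)) * B)).mulVec (u (-(p:ℤ) + 1 + (c : ℤ)))) i
        = ∑ k ∈ Finset.range (p - 1 - (a : ℕ)),
          ((Ct * (A ^ k * B)).mulVec (u (0 - ((a : ℕ) : ℤ) - 1 - (k : ℤ)))) i := by
      rw [← Finset.sum_range_reflect]
      refine Finset.sum_congr rfl fun k hk => ?_
      have hk' := Finset.mem_range.mp hk
      rw [show (p - 1 - (a : ℕ)) - 1 - ((p - 1 - (a : ℕ)) - 1 - k) = k by omega,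
          show -(p:ℤ) + 1 + ((((p - 1 - (a : ℕ)) - 1 - k : ℕ)) : ℤ)
            = 0 - ((a : ℕ) : ℤ) - 1 - (k : ℤ) by omega]
    rw [hsums, show (0 : ℤ) - ((a : ℕ) : ℤ) = -((a : ℕ) : ℤ) by ring]
    ring
  constructor
  · -- existence
    obtain ⟨z, hz⟩ := hx0
    refine ⟨fun bs => if h : (bs.1 : ℕ) < n then z (⟨(bs.1 : ℕ), h⟩, bs.2) else 0, ?_⟩
    set Ue0 : Fin r × Fin m → ℝ :=
      fun bs => if h : (bs.1 : ℕ) < n then z (⟨(bs.1 : ℕ), h⟩, bs.2) else 0 with hUe0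
    have hΦ0 : (∑ b : Fin r, ((A ^ (b : ℕ)) * B).mulVec (fun s => Ue0 (b, s))) = x0 := by
      have hG : ∀ b : Fin r, ((A ^ (b : ℕ)) * B).mulVec (fun s => Ue0 (b, s))
          = (fun c : ℕ => if h : c < n then
              ((A ^ c) * B).mulVec (fun s => z (⟨c, h⟩, s)) else 0) (b : ℕ) := by
        intro b
        by_cases h : (b : ℕ) < n
        · simp only [hUe0, dif_pos h]
        · simp only [hUe0, dif_neg h]
          have : (fun s => (0 : ℝ)) = (0 : Fin m → ℝ) := rfl
          rw [this, Matrix.mulVec_zero]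
      rw [Finset.sum_congr rfl (fun b _ => hG b),
          Fin.sum_univ_eq_sum_range (fun c : ℕ => if h : c < n then
            ((A ^ c) * B).mulVec (fun s => z (⟨c, h⟩, s)) else 0) r]
      rw [← Finset.sum_subset (Finset.range_subset_range.mpr hr)
        (fun c _ hc => dif_neg (by simpa using hc))]
      rw [← Fin.sum_univ_eq_sum_range]
      have hterm : ∀ c : Fin n, (fun c' : ℕ => if h : c' < n then
            ((A ^ c') * B).mulVec (fun s => z (⟨c', h⟩, s)) else 0) (c : ℕ)
          = ((A ^ (c : ℕ)) * B).mulVec (fun s => z (c, s)) := by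
        intro c
        simp [c.isLt]
      rw [Finset.sum_congr rfl (fun c _ => hterm c), hz]
      funext aa
      simp [Matrix.mulVec, dotProduct, Fintype.sum_prod_type, Finset.sum_apply]
    funext ai
    obtain ⟨a, i⟩ := ai
    rw [Pi.add_apply, hPastRow a i]
    congr 1
    rw [tblk_row A B Ct gt hgt 1 p r le_rfl Ue0 a i,
        show 1 + p - (a : ℕ) - 2 = p - 1 - (a : ℕ) by have := a.isLt; omega, hΦ0]
  · -- uniqueness of prediction
    intro Ue hUe
    set ΦUe : Fin n → ℝ := ∑ b : Fin r, ((A ^ (b : ℕ)) * B).mulVec (fun s => Ue (b, s))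
      with hΦUe
    have hkey : ∀ (a : Fin p) (i : Fin qm),
        ((Ct * A ^ (p - 1 - (a : ℕ))).mulVec x0) i
          = ((Ct * A ^ (p - 1 - (a : ℕ))).mulVec ΦUe) i := by
      intro a i
      have h1 := congrFun hUe (a, i)
      rw [Pi.add_apply] at h1
      have h2 := tblk_row A B Ct gt hgt 1 p r le_rfl Ue a i
      rw [show 1 + p - (a : ℕ) - 2 = p - 1 - (a : ℕ) by have := a.isLt; omega] at h2
      rw [hPastRow a i, h2, ← hΦUe] at h1
      linarith
    -- observability forces ΦUe = x0
    have hΦx : ΦUe = x0 := by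
      set O : Matrix (Fin n × Fin qm) (Fin n) ℝ :=
        Matrix.of fun (a : Fin n × Fin qm) (b : Fin n) => (Ct * A ^ (a.1 : ℕ)) a.2 b with hO
      have hOrow : ∀ (v : Fin n → ℝ) (c : Fin n) (i : Fin qm),
          O.mulVec v (c, i) = ((Ct * A ^ (c : ℕ)).mulVec v) i := fun v c i => rfl
      have hOw : O.mulVec (x0 - ΦUe) = 0 := by
        funext ci
        obtain ⟨c, i⟩ := ci
        have hc := c.isLt
        have hpa : p - 1 - ((⟨p - 1 - (c : ℕ), by omega⟩ : Fin p) : ℕ) = (c : ℕ) := by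
          simp only []
          omega
        have h1 := hkey ⟨p - 1 - (c : ℕ), by omega⟩ i
        rw [hpa] at h1
        rw [hOrow, Matrix.mulVec_sub, Pi.sub_apply, h1, sub_self, Pi.zero_apply]
      have hrank : Module.finrank ℝ (LinearMap.range (Matrix.mulVecLin O)) = n := hobs
      have h1 := LinearMap.finrank_range_add_finrank_ker (Matrix.mulVecLin O)
      have h2 : Module.finrank ℝ (Fin n → ℝ) = n := by simp
      rw [h2, hrank] at h1
      have hker : LinearMap.ker (Matrix.mulVecLin O) = ⊥ :=
        Submodule.finrank_eq_zero.mp (by omega)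
      have hmem : (x0 - ΦUe) ∈ LinearMap.ker (Matrix.mulVecLin O) := by
        simpa [Matrix.mulVecLin_apply] using hOw
      rw [hker, Submodule.mem_bot, sub_eq_zero] at hmem
      exact hmem.symm
    -- future rows
    have hFutRow : ∀ (a : Fin pf) (i : Fin q),
        Yf (a, i) = (Ttri g pf).mulVec Uf (a, i) + (Tblk g 1 pf p).mulVec Up (a, i)
          + ((C * A ^ (p + pf - 1 - (a : ℕ))).mulVec x0) i := by
      intro a i
      have ha := a.isLt
      have hxf : x ((pf : ℤ) - ((a : ℕ) : ℤ)) = (A ^ (p + pf - 1 - (a : ℕ))).mulVec x0 +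
          ∑ c ∈ Finset.range (p + pf - 1 - (a : ℕ)),
            ((A ^ ((p + pf - 1 - (a : ℕ)) - 1 - c)) * B).mulVec (u (-(p:ℤ) + 1 + (c : ℤ))) := by
        have h := hstate (p + pf - 1 - (a : ℕ)) (by omega)
        rwa [show -(p:ℤ) + 1 + (((p + pf - 1 - (a : ℕ) : ℕ)) : ℤ)
            = (pf : ℤ) - ((a : ℕ) : ℤ) by omega] at h
      have hCsum : C.mulVec (∑ c ∈ Finset.range (p + pf - 1 - (a : ℕ)),
            ((A ^ ((p + pf - 1 - (a : ℕ)) - 1 - c)) * B).mulVec (u (-(p:ℤ) + 1 + (c : ℤ))))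
          = ∑ c ∈ Finset.range (p + pf - 1 - (a : ℕ)),
            (C * ((A ^ ((p + pf - 1 - (a : ℕ)) - 1 - c)) * B)).mulVec
              (u (-(p:ℤ) + 1 + (c : ℤ))) := by
        rw [mulVec_finsum]
        exact Finset.sum_congr rfl fun c _ => Matrix.mulVec_mulVec _ _ _
      have hYfa : Yf (a, i) = y ((pf : ℤ) - ((a : ℕ) : ℤ)) i := hYf (a, i)
      rw [hYfa, hy _ (by omega) (by omega), Pi.add_apply, hxf, Matrix.mulVec_add, Pi.add_apply,
          Matrix.mulVec_mulVec, hCsum, Finset.sum_apply]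
      rw [show Finset.range (p + pf - 1 - (a : ℕ)) = Finset.range (p + (pf - 1 - (a : ℕ)))
            by congr 1; omega, Finset.sum_range_add]
      -- part A : the first p terms give the Tblk g 1 pf p row
      have hA : ∑ c ∈ Finset.range p,
            ((C * ((A ^ ((p + pf - 1 - (a : ℕ)) - 1 - c)) * B)).mulVec
              (u (-(p:ℤ) + 1 + (c : ℤ)))) i
          = (Tblk g 1 pf p).mulVec Up (a, i) := by
        rw [tblk1_row A B C g hg pf p a i u 0 Up
          (fun bs => by
            rw [hUp bs, show (0:ℤ) - ((bs.1 : ℕ) : ℤ) = -((bs.1 : ℕ) : ℤ) by ring])]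
        rw [← Finset.sum_range_reflect]
        refine Finset.sum_congr rfl fun b hb => ?_
        have hb' := Finset.mem_range.mp hb
        rw [show (p + pf - 1 - (a : ℕ)) - 1 - (p - 1 - b) = pf - 1 - (a : ℕ) + b by omega,
            show -(p:ℤ) + 1 + (((p - 1 - b : ℕ)) : ℤ) = 0 - (b : ℤ) by omega]
      -- part B : the remaining terms plus the direct term give the Ttri g pf row
      have hB : (D.mulVec (u ((pf : ℤ) - ((a : ℕ) : ℤ)))) i
            + ∑ c ∈ Finset.range (pf - 1 - (a : ℕ)),
              ((C * ((A ^ ((p + pf - 1 - (a : ℕ)) - 1 - (p + c))) * B)).mulVec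
                (u (-(p:ℤ) + 1 + ((p + c : ℕ) : ℤ)))) i
          = (Ttri g pf).mulVec Uf (a, i) := by
        rw [ttri_row A B C D g hg0 hg pf a i u (pf : ℤ) Uf (fun bs => hUf bs)]
        congr 1
        rw [← Finset.sum_range_reflect]
        refine Finset.sum_congr rfl fun k hk => ?_
        have hk' := Finset.mem_range.mp hk
        rw [show (p + pf - 1 - (a : ℕ)) - 1 - (p + ((pf - 1 - (a : ℕ)) - 1 - k)) = k by omega,
            show -(p:ℤ) + 1 + (((p + ((pf - 1 - (a : ℕ)) - 1 - k) : ℕ)) : ℤ)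
              = (pf : ℤ) - ((a : ℕ) : ℤ) - 1 - (k : ℤ) by omega]
      rw [← hA, ← hB]
      ring
    -- assemble
    funext ai
    obtain ⟨a, i⟩ := ai
    rw [Pi.add_apply, Pi.add_apply, hFutRow a i]
    congr 1
    rw [tblk_row A B C g hg (p + 1) pf r (by omega) Ue a i,
        show p + 1 + pf - (a : ℕ) - 2 = p + pf - 1 - (a : ℕ) by have := a.isLt; omega,
        ← hΦUe, hΦx]
end

section
/- Let g_k ∈ ℝ^{q×m} and g̃_k ∈ ℝ^{q_m×m} (k ≥ 0) be matrix sequences, let p, p_f, r ≥ 1, and fix vectors U_p ∈ ℝ^{mp} and U_f ∈ ℝ^{mp_f}. For vectors U^e, Û^e ∈ ℝ^{mr} define Ỹ_p = T_p(g̃) U_p + T_1^{p,r}(g̃) U^e, Y_f = T_{p_f}(g) U_f + T_1^{p_f,p}(g) U_p + T_{p+1}^{p_f,r}(g) U^e, and likewise Ŷ̃_p = T_p(g̃) U_p + T_1^{p,r}(g̃) Û^e, Ŷ_f = T_{p_f}(g) U_f + T_1^{p_f,p}(g) U_p + T_{p+1}^{p_f,r}(g) Û^e. If the null space of T_1^{p,r}(g̃)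 is contained in the null space of T_{p+1}^{p_f,r}(g), then ‖Ŷ_f − Y_f‖ ≤ σ_max(T_{p+1}^{p_f,r}(g) · P) · ‖Ŷ̃_p − Ỹ_p‖, where P is the Moore–Penrose pseudoinverse of T_1^{p,r}(g̃). -/
open Matrix Filter

lemma enorm_eq_norm {ι : Type*} [Fintype ι] (v : ι → ℝ) :
    _root_.enorm v = ‖(WithLp.equiv 2 (ι → ℝ)).symm v‖ := by
  rw [EuclideanSpace.norm_eq, _root_.enorm]
  congr 1
  apply Finset.sum_congr rfl
  intro i _
  simp [sq_abs]

lemma enorm_mulVec_le {ι κ : Type*} [Fintype ι] [Fintype κ] [DecidableEq κ]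
    (M : Matrix ι κ ℝ) (x : κ → ℝ) :
    _root_.enorm (M.mulVec x) ≤ sigmaMax M * _root_.enorm x := by
  set f := LinearMap.toContinuousLinearMap (Matrix.toEuclideanLin M) with hf
  have hfx : ∀ y : κ → ℝ, _root_.enorm (M.mulVec y) = ‖f ((WithLp.equiv 2 (κ → ℝ)).symm y)‖ := by
    intro y
    rw [enorm_eq_norm]
    congr 1
  have hbdd : BddAbove {y | ∃ x : κ → ℝ, _root_.enorm x = 1 ∧ y = _root_.enorm (M.mulVec x)} := by
    refine ⟨‖f‖, ?_⟩
    rintro y ⟨z, hz, rfl⟩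
    rw [hfx]
    calc ‖f ((WithLp.equiv 2 (κ → ℝ)).symm z)‖ ≤ ‖f‖ * ‖(WithLp.equiv 2 (κ → ℝ)).symm z‖ :=
          f.le_opNorm _
      _ = ‖f‖ * 1 := by rw [← enorm_eq_norm, hz]
      _ = ‖f‖ := mul_one _
  by_cases hx0 : _root_.enorm x = 0
  · have hx : x = 0 := by
      have : ∀ i, x i = 0 := by
        intro i
        have hsum : (∑ i, x i ^ 2) = 0 := by
          by_contra h
          have hpos : 0 < ∑ i, x i ^ 2 :=
            lt_of_le_of_ne (Finset.sum_nonneg fun i _ => sq_nonneg _) (Ne.symm h)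
          exact absurd hx0 (by simp [_root_.enorm, Real.sqrt_eq_zero', not_le, hpos])
        have := Finset.sum_eq_zero_iff_of_nonneg (fun i _ => sq_nonneg (x i)) |>.mp hsum
          i (Finset.mem_univ i)
        exact pow_eq_zero_iff (n := 2) (by norm_num) |>.mp this
      funext i; exact this i
    simp [hx, Matrix.mulVec_zero, _root_.enorm, hx0]
  · have hxpos : 0 < _root_.enorm x :=
      lt_of_le_of_ne (Real.sqrt_nonneg _) (Ne.symm hx0)
    set u := (_root_.enorm x)⁻¹ • x with hu
    have hMu : M.mulVec u = (_root_.enorm x)⁻¹ • M.mulVec x := by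
      rw [hu, Matrix.mulVec_smul]
    have henu : ∀ (c : ℝ) (v : κ → ℝ), 0 ≤ c → _root_.enorm (c • v) = c * _root_.enorm v := by
      intro c v hc
      simp only [_root_.enorm, Pi.smul_apply, smul_eq_mul, mul_pow, ← Finset.mul_sum]
      rw [Real.sqrt_mul (by positivity), Real.sqrt_sq hc]
    have henu' : ∀ (c : ℝ) (v : ι → ℝ), 0 ≤ c → _root_.enorm (c • v) = c * _root_.enorm v := by
      intro c v hc
      simp only [_root_.enorm, Pi.smul_apply, smul_eq_mul, mul_pow, ← Finset.mul_sum]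
      rw [Real.sqrt_mul (by positivity), Real.sqrt_sq hc]
    have huu : _root_.enorm u = 1 := by
      rw [hu, henu _ _ (by positivity), inv_mul_cancel₀ hx0]
    have hmem : _root_.enorm (M.mulVec u) ∈
        {y | ∃ x : κ → ℝ, _root_.enorm x = 1 ∧ y = _root_.enorm (M.mulVec x)} := ⟨u, huu, rfl⟩
    have hle : _root_.enorm (M.mulVec u) ≤ sigmaMax M := le_csSup hbdd hmem
    have heq : _root_.enorm (M.mulVec u) = (_root_.enorm x)⁻¹ * _root_.enorm (M.mulVec x) := by
      rw [hMu, henu' _ _ (by positivity)]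
    rw [heq] at hle
    calc _root_.enorm (M.mulVec x) = ((_root_.enorm x)⁻¹ * _root_.enorm (M.mulVec x)) * _root_.enorm x := by
          field_simp
      _ ≤ sigmaMax M * _root_.enorm x := by
          apply mul_le_mul_of_nonneg_right hle (le_of_lt hxpos)

/-- linear prediction-error bound: if `Null T_1^{p,r}(g̃) ⊆
Null T_{p+1}^{p_f,r}(g)`, then `‖Ŷ_f − Y_f‖ ≤ σ_max(T_{p+1}^{p_f,r}(g)·P)‖Ŷ̃_p − Ỹ_p‖`. -/
theorem stmt2 {q m qm : ℕ}
    (g : ℕ → Matrix (Fin q) (Fin m) ℝ) (gt : ℕ → Matrix (Fin qm) (Fin m) ℝ)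
    (p pf r : ℕ) (hp : 1 ≤ p) (hpf : 1 ≤ pf) (hr : 1 ≤ r)
    (Up : Fin p × Fin m → ℝ) (Uf : Fin pf × Fin m → ℝ)
    (Ue Ueh : Fin r × Fin m → ℝ)
    (Yp Yph : Fin p × Fin qm → ℝ) (Yf Yfh : Fin pf × Fin q → ℝ)
    (hYp : Yp = (Ttri gt p).mulVec Up + (Tblk gt 1 p r).mulVec Ue)
    (hYf : Yf = (Ttri g pf).mulVec Uf + (Tblk g 1 pf p).mulVec Up +
      (Tblk g (p + 1) pf r).mulVec Ue)
    (hYph : Yph = (Ttri gt p).mulVec Up + (Tblk gt 1 p r).mulVec Ueh)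
    (hYfh : Yfh = (Ttri g pf).mulVec Uf + (Tblk g 1 pf p).mulVec Up +
      (Tblk g (p + 1) pf r).mulVec Ueh)
    (P : Matrix (Fin r × Fin m) (Fin p × Fin qm) ℝ)
    (hP : IsMPInv (Tblk gt 1 p r) P)
    (hnull : ∀ v : Fin r × Fin m → ℝ, (Tblk gt 1 p r).mulVec v = 0 →
      (Tblk g (p + 1) pf r).mulVec v = 0) :
    _root_.enorm (Yfh - Yf) ≤ sigmaMax (Tblk g (p + 1) pf r * P) * _root_.enorm (Yph - Yp) := by
  set A := Tblk gt 1 p r with hA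
  set B := Tblk g (p + 1) pf r with hB
  set d := Ueh - Ue with hd
  have hYpd : Yph - Yp = A.mulVec d := by
    rw [hYph, hYp, hd, Matrix.mulVec_sub]
    abel
  have hYfd : Yfh - Yf = B.mulVec d := by
    rw [hYfh, hYf, hd, Matrix.mulVec_sub]
    abel
  have h0 : A.mulVec (d - P.mulVec (A.mulVec d)) = 0 := by
    rw [Matrix.mulVec_sub, Matrix.mulVec_mulVec, Matrix.mulVec_mulVec,
      hP.1, sub_self]
  have h1 := hnull _ h0
  rw [Matrix.mulVec_sub, Matrix.mulVec_mulVec, sub_eq_zero] at h1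
  have key : B.mulVec d = (B * P).mulVec (A.mulVec d) := by
    rw [h1, Matrix.mulVec_mulVec]
  rw [hYfd, hYpd, key]
  exact enorm_mulVec_le _ _
end

section
/- Let A ∈ ℝ^{n×n}, B ∈ ℝ^{n×m}, C ∈ ℝ^{q×n}, and C̃ ∈ ℝ^{q_m×n}, and define the sequences g_k = C A^{k−1} B and g̃_k = C̃ A^{k−1} B for k ≥ 1. If the pair (A, C̃) is observable, then for every r ≥ 1 and p_f ≥ 1 there exists p ≥ 1 (in fact p = n works) such that the null space of T_1^{p,r}(g̃) is contained in the null space of T_{p+1}^{p_f,r}(g). -/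
open Matrix Filter

/-- Auxiliary: pulling the "reachability" vector out of a row-block sum. -/
lemma key_sum {n m r : ℕ} {q' : ℕ} (A : Matrix (Fin n) (Fin n) ℝ)
    (B : Matrix (Fin n) (Fin m) ℝ) (C' : Matrix (Fin q') (Fin n) ℝ)
    (v : Fin r × Fin m → ℝ) (s : ℕ) (i : Fin q') :
    ∑ b : Fin r, ∑ j : Fin m, (C' * A ^ (s + (b : ℕ)) * B) i j * v (b, j)
      = (C' * A ^ s).mulVec
          (∑ b : Fin r, (A ^ (b : ℕ) * B).mulVec (fun j => v (b, j))) i := by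
  have h : (C' * A ^ s).mulVec
        (∑ b : Fin r, (A ^ (b : ℕ) * B).mulVec (fun j => v (b, j)))
      = ∑ b : Fin r, (C' * A ^ (s + (b : ℕ)) * B).mulVec (fun j => v (b, j)) := by
    rw [← Matrix.mulVecLin_apply, map_sum]
    refine Finset.sum_congr rfl fun b _ => ?_
    rw [Matrix.mulVecLin_apply, Matrix.mulVec_mulVec]
    congr 1
    rw [pow_add]
    simp [Matrix.mul_assoc]
  rw [h, Finset.sum_apply]
  refine Finset.sum_congr rfl fun b _ => ?_
  simp [Matrix.mulVec, dotProduct]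

/-- if `(A, C̃)` is observable then for every `r ≥ 1`, `p_f ≥ 1` there exists
`p ≥ 1` with `Null T_1^{p,r}(g̃) ⊆ Null T_{p+1}^{p_f,r}(g)`. -/
theorem stmt3 {n m q qm : ℕ}
    (A : Matrix (Fin n) (Fin n) ℝ) (B : Matrix (Fin n) (Fin m) ℝ)
    (C : Matrix (Fin q) (Fin n) ℝ) (Ct : Matrix (Fin qm) (Fin n) ℝ)
    (g : ℕ → Matrix (Fin q) (Fin m) ℝ)
    (hg : ∀ k : ℕ, 1 ≤ k → g k = C * A ^ (k - 1) * B)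
    (gt : ℕ → Matrix (Fin qm) (Fin m) ℝ)
    (hgt : ∀ k : ℕ, 1 ≤ k → gt k = Ct * A ^ (k - 1) * B)
    (hobs : (Matrix.of fun (a : Fin n × Fin qm) (b : Fin n) =>
      (Ct * A ^ (a.1 : ℕ)) a.2 b).rank = n)
    (r pf : ℕ) (hr : 1 ≤ r) (hpf : 1 ≤ pf) :
    ∃ p : ℕ, 1 ≤ p ∧ ∀ v : Fin r × Fin m → ℝ,
      (Tblk gt 1 p r).mulVec v = 0 → (Tblk g (p + 1) pf r).mulVec v = 0 := by
  rcases Nat.eq_zero_or_pos n with hn | hn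
  · refine ⟨1, le_refl 1, fun v _ => ?_⟩
    funext ai
    obtain ⟨a, i⟩ := ai
    have ha : (a : ℕ) < pf := a.2
    simp only [Matrix.mulVec, dotProduct, Tblk, Matrix.of_apply, Pi.zero_apply]
    refine Finset.sum_eq_zero fun x _ => ?_
    rw [hg _ (by omega)]
    subst hn
    simp [Matrix.mul_apply]
  · refine ⟨n, hn, fun v hv => ?_⟩
    set w : Fin n → ℝ := ∑ b : Fin r, (A ^ (b : ℕ) * B).mulVec (fun j => v (b, j)) with hw
    -- From the hypothesis: Ct * A^s annihilates w for all s < n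
    have hCt : ∀ s : ℕ, s < n → ∀ i : Fin qm, (Ct * A ^ s).mulVec w i = 0 := by
      intro s hs i
      have ha : n - 1 - s < n := by omega
      set a : Fin n := ⟨n - 1 - s, ha⟩
      have h0 := congrFun hv (a, i)
      simp only [Matrix.mulVec, dotProduct, Tblk, Matrix.of_apply, Pi.zero_apply] at h0
      rw [← key_sum A B Ct v s i, ← h0]
      rw [Fintype.sum_prod_type]
      refine Finset.sum_congr rfl fun b _ => Finset.sum_congr rfl fun j _ => ?_
      have hk : (1 : ℕ) ≤ 1 + n + (b : ℕ) - ((a : ℕ) + 1) := by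
        have := a.2; omega
      rw [hgt _ hk]
      have : 1 + n + (b : ℕ) - ((a : ℕ) + 1) - 1 = s + (b : ℕ) := by
        simp only [a]; omega
      rw [this]
    -- observability implies w = 0
    have hwz : w = 0 := by
      set O : Matrix (Fin n × Fin qm) (Fin n) ℝ :=
        Matrix.of fun (a : Fin n × Fin qm) (b : Fin n) => (Ct * A ^ (a.1 : ℕ)) a.2 b with hO
      have hOw : O.mulVec w = 0 := by
        funext ai
        obtain ⟨a, i⟩ := ai
        have := hCt (a : ℕ) a.2 i
        simpa [Matrix.mulVec, dotProduct, hO] using this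
      have hker : LinearMap.ker O.mulVecLin = ⊥ := by
        have h1 := LinearMap.finrank_range_add_finrank_ker O.mulVecLin
        have h2 : Module.finrank ℝ (Fin n → ℝ) = n := by
          simp [Module.finrank_fintype_fun_eq_card]
        rw [h2] at h1
        have h3 : O.rank = n := hobs
        rw [Matrix.rank] at h3
        have h4 : Module.finrank ℝ (LinearMap.ker O.mulVecLin) = 0 := by omega
        exact Submodule.finrank_eq_zero.mp h4
      have : w ∈ LinearMap.ker O.mulVecLin := by
        simpa [Matrix.mulVecLin] using hOw
      rw [hker] at this
      simpa using this
    -- conclusion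
    funext ai
    obtain ⟨a, i⟩ := ai
    have ha : (a : ℕ) < pf := a.2
    have : (Tblk g (n + 1) pf r).mulVec v (a, i)
        = (C * A ^ (n + pf - 1 - (a : ℕ))).mulVec w i := by
      rw [← key_sum A B C v (n + pf - 1 - (a : ℕ)) i]
      simp only [Matrix.mulVec, dotProduct, Tblk, Matrix.of_apply]
      rw [Fintype.sum_prod_type]
      refine Finset.sum_congr rfl fun b _ => Finset.sum_congr rfl fun j _ => ?_
      have hk : (1 : ℕ) ≤ n + 1 + pf + (b : ℕ) - ((a : ℕ) + 1) := by omega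
      rw [hg _ hk]
      have : n + 1 + pf + (b : ℕ) - ((a : ℕ) + 1) - 1 = n + pf - 1 - (a : ℕ) + (b : ℕ) := by
        omega
      rw [this]
    rw [this, hwz]
    simp
end

section
/- Let M₁ ∈ ℝ^{d₁×n} and M₂ ∈ ℝ^{d₂×n} with the null space of M₁ contained in the null space of M₂, and let P be the Moore–Penrose pseudoinverse of M₁. Then: (i) sup_{λ>0} σ_max(M₂ (M₁ᵀM₁ + λI)⁻¹) < ∞; (ii) lim_{λ→0⁺} λ · M₂ (M₁ᵀM₁ + λI)⁻¹ = 0; and (iii) lim_{λ→0⁺} M₂ (M₁ᵀM₁ + λI)⁻¹ M₁ᵀ = M₂ P. -/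
open Matrix Filter

section helpers

variable {k l : ℕ}

/-- view a vector as an element of Euclidean space -/
noncomputable def toE {ι : Type*} [Fintype ι] (v : ι → ℝ) : EuclideanSpace ℝ ι := WithLp.toLp 2 v

lemma enorm_eq {ι : Type*} [Fintype ι] (v : ι → ℝ) : _root_.enorm v = ‖toE v‖ := by
  rw [EuclideanSpace.norm_eq]
  simp [_root_.enorm, toE, Real.norm_eq_abs, sq_abs]

lemma enorm_nn {ι : Type*} [Fintype ι] (v : ι → ℝ) : 0 ≤ _root_.enorm v := Real.sqrt_nonneg _

lemma venorm_sub_le (u v : Fin k → ℝ) : _root_.enorm (u - v) ≤ _root_.enorm u + _root_.enorm v := by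
  rw [enorm_eq, enorm_eq, enorm_eq]
  exact norm_sub_le (toE u) (toE v)

lemma venorm_smul (c : ℝ) (v : Fin k → ℝ) : _root_.enorm (c • v) = |c| * _root_.enorm v := by
  rw [enorm_eq, enorm_eq]
  simpa [toE, Real.norm_eq_abs] using norm_smul c (toE v)

lemma venorm_eq_zero {ι : Type*} [Fintype ι] {v : ι → ℝ} (h : _root_.enorm v = 0) : v = 0 := by
  rw [enorm_eq, norm_eq_zero] at h
  simpa [toE] using h

lemma dot_le_enorm (u v : Fin k → ℝ) : u ⬝ᵥ v ≤ _root_.enorm u * _root_.enorm v := by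
  rw [enorm_eq, enorm_eq]
  have h := real_inner_le_norm (toE u) (toE v)
  have h2 : (inner ℝ (toE u) (toE v) : ℝ) = u ⬝ᵥ v := by
    simp [toE, PiLp.inner_apply, dotProduct, RCLike.inner_apply, mul_comm]
  linarith [h, h2.ge]

lemma sq_enorm (v : Fin k → ℝ) : _root_.enorm v ^ 2 = v ⬝ᵥ v := by
  rw [_root_.enorm, Real.sq_sqrt (by positivity)]
  simp [dotProduct, sq]

lemma abs_le_enorm (v : Fin k → ℝ) (i : Fin k) : |v i| ≤ _root_.enorm v := by
  have h : v i ^ 2 ≤ ∑ j, v j ^ 2 :=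
    Finset.single_le_sum (f := fun j => v j ^ 2) (fun j _ => sq_nonneg _) (Finset.mem_univ i)
  calc |v i| = Real.sqrt (v i ^ 2) := (Real.sqrt_sq_eq_abs _).symm
    _ ≤ _root_.enorm v := Real.sqrt_le_sqrt h

lemma enorm_single (j : Fin k) : _root_.enorm (Pi.single j (1:ℝ)) = 1 := by
  have : ∑ i, ((Pi.single j (1:ℝ) : Fin k → ℝ) i) ^ 2 = 1 := by
    simp [Pi.single_apply, Finset.sum_ite_eq']
  simp [_root_.enorm, this]

lemma entry_abs_le (N : Matrix (Fin l) (Fin k) ℝ) (c : ℝ)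
    (h : ∀ x, _root_.enorm (N.mulVec x) ≤ c * _root_.enorm x) (i : Fin l) (j : Fin k) : |N i j| ≤ c := by
  have h1 := h (Pi.single j (1:ℝ))
  rw [enorm_single] at h1
  have h2 : |N.mulVec (Pi.single j 1) i| ≤ _root_.enorm (N.mulVec (Pi.single j 1)) :=
    abs_le_enorm _ i
  rw [Matrix.mulVec_single] at h2
  simpa using h2.trans (by simpa using h1)

noncomputable def frob (N : Matrix (Fin l) (Fin k) ℝ) : ℝ :=
  Real.sqrt (∑ i, ∑ j, N i j ^ 2)

lemma frob_nn (N : Matrix (Fin l) (Fin k) ℝ) : 0 ≤ frob N := Real.sqrt_nonneg _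

lemma frob_bound (N : Matrix (Fin l) (Fin k) ℝ) (x : Fin k → ℝ) :
    _root_.enorm (N.mulVec x) ≤ frob N * _root_.enorm x := by
  rw [_root_.enorm, frob, _root_.enorm, ← Real.sqrt_mul (by positivity)]
  apply Real.sqrt_le_sqrt
  rw [Finset.sum_mul]
  apply Finset.sum_le_sum
  intro i _
  have := Finset.sum_mul_sq_le_sq_mul_sq Finset.univ (fun j => N i j) x
  simpa [Matrix.mulVec, dotProduct] using this

lemma mul_col {a b c : ℕ} (M : Matrix (Fin a) (Fin b) ℝ) (N : Matrix (Fin b) (Fin c) ℝ)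
    (j : Fin c) : (fun i => (M * N) i j) = M.mulVec (fun k => N k j) := by
  ext i
  simp [Matrix.mul_apply, Matrix.mulVec, dotProduct]

lemma scalar_l3 {a e t lam : ℝ} (hlam : 0 < lam) (ha : 0 ≤ a) (he : 0 ≤ e) (ht : 0 ≤ t)
    (h : a ^ 2 + lam * e ^ 2 ≤ a * t) : lam * e ≤ Real.sqrt lam * t := by
  have h6 : (lam * e) ^ 2 ≤ (Real.sqrt lam * t) ^ 2 := by
    rw [mul_pow, mul_pow, Real.sq_sqrt hlam.le]
    nlinarith [sq_nonneg (t - 2 * a), hlam, mul_pos hlam hlam]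
  calc lam * e = Real.sqrt ((lam * e) ^ 2) := (Real.sqrt_sq (by positivity)).symm
    _ ≤ Real.sqrt ((Real.sqrt lam * t) ^ 2) := Real.sqrt_le_sqrt h6
    _ = Real.sqrt lam * t := Real.sqrt_sq (by positivity)

lemma chain1 {lam eE Cc ew ex : ℝ} (hlam : 0 ≤ lam) (hC : 0 ≤ Cc)
    (h1 : eE ≤ Cc * ew) (h2 : lam * ew ≤ ex) : lam * eE ≤ Cc * ex := by
  have a1 := mul_le_mul_of_nonneg_left h1 hlam
  have a2 := mul_le_mul_of_nonneg_left h2 hC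
  nlinarith

end helpers

set_option maxHeartbeats 1000000 in
/-- regularized-inverse facts: (i) `σ_max(M₂(M₁ᵀM₁+λI)⁻¹)` is bounded over
`λ > 0`; (ii) `λ·M₂(M₁ᵀM₁+λI)⁻¹ → 0` as `λ → 0⁺`; (iii)
`M₂(M₁ᵀM₁+λI)⁻¹M₁ᵀ → M₂P` as `λ → 0⁺`. -/
theorem stmt6 {d₁ d₂ n : ℕ}
    (M₁ : Matrix (Fin d₁) (Fin n) ℝ) (M₂ : Matrix (Fin d₂) (Fin n) ℝ)
    (hnull : ∀ x : Fin n → ℝ, M₁.mulVec x = 0 → M₂.mulVec x = 0)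
    (P : Matrix (Fin n) (Fin d₁) ℝ) (hP : IsMPInv M₁ P) :
    (∃ Cb : ℝ, ∀ lam : ℝ, 0 < lam →
        sigmaMax (M₂ * (M₁ᵀ * M₁ + lam • (1 : Matrix (Fin n) (Fin n) ℝ))⁻¹) ≤ Cb) ∧
    Filter.Tendsto
      (fun lam : ℝ => lam • (M₂ * (M₁ᵀ * M₁ + lam • (1 : Matrix (Fin n) (Fin n) ℝ))⁻¹))
      (nhdsWithin 0 (Set.Ioi 0)) (nhds 0) ∧
    Filter.Tendsto
      (fun lam : ℝ => M₂ * (M₁ᵀ * M₁ + lam • (1 : Matrix (Fin n) (Fin n) ℝ))⁻¹ * M₁ᵀ)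
      (nhdsWithin 0 (Set.Ioi 0)) (nhds (M₂ * P)) := by
  obtain ⟨h1, h2, h3, h4⟩ := hP
  set S : Matrix (Fin n) (Fin n) ℝ := M₁ᵀ * M₁ with hS
  set E : Matrix (Fin d₂) (Fin n) ℝ := M₂ * P * Pᵀ with hEdef
  -- M₂ = M₂ * (P * M₁)
  have hM2 : M₂ * (P * M₁) = M₂ := by
    have h0 : M₂ * (1 - P * M₁) = 0 := by
      ext i j
      have hc : M₁.mulVec (fun k => ((1 - P * M₁ : Matrix (Fin n) (Fin n) ℝ)) k j) = 0 := by
        rw [← mul_col]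
        have hz : M₁ * (1 - P * M₁) = 0 := by
          rw [Matrix.mul_sub, Matrix.mul_one, ← Matrix.mul_assoc, h1, sub_self]
        rw [hz]
        rfl
      have h5 := congrFun (hnull _ hc) i
      rw [← mul_col M₂ (1 - P * M₁) j] at h5
      simpa using h5
    rw [Matrix.mul_sub, Matrix.mul_one, sub_eq_zero] at h0
    exact h0.symm
  have hPM : Pᵀ * M₁ᵀ = M₁ * P := by
    rw [← Matrix.transpose_mul, h3]
  have hE : E * S = M₂ := by
    rw [hEdef, hS, ← Matrix.mul_assoc, Matrix.mul_assoc (M₂ * P) Pᵀ M₁ᵀ, hPM,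
      Matrix.mul_assoc M₂ P (M₁ * P), ← Matrix.mul_assoc P M₁ P, h2,
      Matrix.mul_assoc M₂ P M₁, hM2]
  have hEA : E * M₁ᵀ = M₂ * P := by
    rw [hEdef, Matrix.mul_assoc (M₂ * P) Pᵀ M₁ᵀ, hPM, Matrix.mul_assoc M₂ P (M₁ * P),
      ← Matrix.mul_assoc P M₁ P, h2]
  set C := frob E with hC
  have hCnn : 0 ≤ C := frob_nn E
  -- master estimates for each lam > 0
  have master : ∀ lam : ℝ, 0 < lam →
      (∀ x, _root_.enorm ((M₂ * (S + lam • (1 : Matrix (Fin n) (Fin n) ℝ))⁻¹).mulVec x)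
          ≤ 2 * C * _root_.enorm x) ∧
      (∀ i j, |(M₂ * (S + lam • (1 : Matrix (Fin n) (Fin n) ℝ))⁻¹ * M₁ᵀ) i j - (M₂ * P) i j|
          ≤ C * Real.sqrt lam) := by
    intro lam hlam
    set R : Matrix (Fin n) (Fin n) ℝ := S + lam • (1 : Matrix (Fin n) (Fin n) ℝ) with hR
    have key : ∀ y : Fin n → ℝ,
        y ⬝ᵥ R.mulVec y = _root_.enorm (M₁.mulVec y) ^ 2 + lam * _root_.enorm y ^ 2 := by
      intro y
      rw [hR, Matrix.add_mulVec, dotProduct_add, Matrix.smul_mulVec,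
        Matrix.one_mulVec, dotProduct_smul, smul_eq_mul, sq_enorm, sq_enorm, hS,
        ← Matrix.mulVec_mulVec, Matrix.dotProduct_mulVec, Matrix.vecMul_transpose]
    have hdet : IsUnit R.det := by
      rw [isUnit_iff_ne_zero]
      intro h0
      obtain ⟨v, hv, hv0⟩ := Matrix.exists_mulVec_eq_zero_iff.mpr h0
      have hk := key v
      rw [hv0] at hk
      rw [dotProduct_zero] at hk
      have hv' : 0 < _root_.enorm v := by
        rcases (enorm_nn v).eq_or_lt with h | h
        · exact absurd (venorm_eq_zero h.symm) hv
        · exact h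
      nlinarith [enorm_nn (M₁.mulVec v), sq_nonneg (_root_.enorm (M₁.mulVec v)), mul_pos hlam (mul_pos hv' hv')]
    have hB1 : R * R⁻¹ = 1 := Matrix.mul_nonsing_inv R hdet
    set B := R⁻¹ with hBdef
    have hRB : ∀ x, R.mulVec (B.mulVec x) = x := by
      intro x; rw [Matrix.mulVec_mulVec, hB1, Matrix.one_mulVec]
    have L2 : ∀ x, lam * _root_.enorm (B.mulVec x) ≤ _root_.enorm x := by
      intro x
      have hk := key (B.mulVec x)
      rw [hRB x] at hk
      have hcs : (B.mulVec x) ⬝ᵥ x ≤ _root_.enorm (B.mulVec x) * _root_.enorm x := dot_le_enorm _ _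
      rcases (enorm_nn (B.mulVec x)).eq_or_lt with h | h
      · rw [← h, mul_zero]; exact enorm_nn x
      · have h5 : lam * _root_.enorm (B.mulVec x) * _root_.enorm (B.mulVec x)
            ≤ _root_.enorm x * _root_.enorm (B.mulVec x) := by
          have hsq : sq_abs (_root_.enorm (B.mulVec x)) = sq_abs (_root_.enorm (B.mulVec x)) := rfl
          nlinarith [sq_nonneg (_root_.enorm (M₁.mulVec (B.mulVec x))), hk, hcs]
        exact le_of_mul_le_mul_right h5 h
    have L3 : ∀ x, lam * _root_.enorm (B.mulVec (M₁ᵀ.mulVec x)) ≤ Real.sqrt lam * _root_.enorm x := by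
      intro x
      have hk := key (B.mulVec (M₁ᵀ.mulVec x))
      rw [hRB (M₁ᵀ.mulVec x)] at hk
      have hd : (B.mulVec (M₁ᵀ.mulVec x)) ⬝ᵥ M₁ᵀ.mulVec x
          = (M₁.mulVec (B.mulVec (M₁ᵀ.mulVec x))) ⬝ᵥ x := by
        rw [Matrix.dotProduct_mulVec, Matrix.vecMul_transpose]
      rw [hd] at hk
      have hcs : (M₁.mulVec (B.mulVec (M₁ᵀ.mulVec x))) ⬝ᵥ x
          ≤ _root_.enorm (M₁.mulVec (B.mulVec (M₁ᵀ.mulVec x))) * _root_.enorm x := dot_le_enorm _ _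
      rw [hk] at hcs
      exact scalar_l3 hlam (enorm_nn _) (enorm_nn _) (enorm_nn _) hcs
    have hSB : S * B = 1 - lam • B := by
      have h7 : S * B + lam • B = 1 := by
        have h8 := hB1
        rw [hR, add_mul, Matrix.smul_mul, Matrix.one_mul] at h8
        exact h8
      exact eq_sub_of_add_eq h7
    have keyId : M₂ * B = E - lam • (E * B) := by
      calc M₂ * B = E * S * B := by rw [hE]
        _ = E * (S * B) := Matrix.mul_assoc E S B
        _ = E * (1 - lam • B) := by rw [hSB]
        _ = E - lam • (E * B) := by rw [Matrix.mul_sub, Matrix.mul_one, Matrix.mul_smul]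
    have keyId3 : M₂ * B * M₁ᵀ = M₂ * P - lam • (E * (B * M₁ᵀ)) := by
      rw [keyId, Matrix.sub_mul, Matrix.smul_mul, hEA, Matrix.mul_assoc E B M₁ᵀ]
    constructor
    · intro x
      have h9 : (E * B).mulVec x = E.mulVec (B.mulVec x) := by
        rw [Matrix.mulVec_mulVec]
      have hmv : (M₂ * B).mulVec x = E.mulVec x - lam • (E.mulVec (B.mulVec x)) := by
        rw [keyId, Matrix.sub_mulVec, Matrix.smul_mulVec, h9]
      rw [hmv]
      have t1 : _root_.enorm (E.mulVec x) ≤ C * _root_.enorm x := frob_bound E x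
      have t2 : _root_.enorm (lam • E.mulVec (B.mulVec x)) ≤ C * _root_.enorm x := by
        rw [venorm_smul, abs_of_pos hlam]
        exact chain1 hlam.le hCnn (frob_bound E (B.mulVec x)) (L2 x)
      calc _root_.enorm (E.mulVec x - lam • E.mulVec (B.mulVec x))
          ≤ _root_.enorm (E.mulVec x) + _root_.enorm (lam • E.mulVec (B.mulVec x)) := venorm_sub_le _ _
        _ ≤ 2 * C * _root_.enorm x := by linarith
    · intro i j
      have hent : (M₂ * B * M₁ᵀ) i j - (M₂ * P) i j = -((lam • (E * (B * M₁ᵀ))) i j) := by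
        rw [keyId3]
        simp [Matrix.sub_apply]
      rw [hent, abs_neg]
      apply entry_abs_le
      intro x
      have h9 : (E * (B * M₁ᵀ)).mulVec x = E.mulVec (B.mulVec (M₁ᵀ.mulVec x)) := by
        rw [Matrix.mulVec_mulVec, Matrix.mulVec_mulVec, Matrix.mul_assoc E B M₁ᵀ]
      have hmv : (lam • (E * (B * M₁ᵀ))).mulVec x
          = lam • (E.mulVec (B.mulVec (M₁ᵀ.mulVec x))) := by
        rw [Matrix.smul_mulVec, h9]
      rw [hmv, venorm_smul, abs_of_pos hlam]
      have hres := chain1 hlam.le hCnn (frob_bound E (B.mulVec (M₁ᵀ.mulVec x))) (L3 x)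
      calc lam * _root_.enorm (E.mulVec (B.mulVec (M₁ᵀ.mulVec x)))
          ≤ C * (Real.sqrt lam * _root_.enorm x) := hres
        _ = C * Real.sqrt lam * _root_.enorm x := by ring
  refine ⟨⟨2 * C, ?_⟩, ?_, ?_⟩
  · intro lam hlam
    apply Real.sSup_le
    · rintro y ⟨x, hx, rfl⟩
      have h := (master lam hlam).1 x
      rw [hx, mul_one] at h
      exact h
    · linarith
  · apply tendsto_pi_nhds.mpr
    intro i
    rw [tendsto_pi_nhds]
    intro j
    apply squeeze_zero_norm' (a := fun lam => lam * (2 * C))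
    · filter_upwards [self_mem_nhdsWithin] with lam hlam
      have h := entry_abs_le _ _ ((master lam hlam).1) i j
      have he : (lam • (M₂ * (S + lam • (1 : Matrix (Fin n) (Fin n) ℝ))⁻¹)) i j
          = lam * (M₂ * (S + lam • (1 : Matrix (Fin n) (Fin n) ℝ))⁻¹) i j := rfl
      rw [Real.norm_eq_abs, he, abs_mul, abs_of_pos hlam]
      exact mul_le_mul_of_nonneg_left h hlam.le
    · have hcont : Continuous fun lam : ℝ => lam * (2 * C) := by continuity
      have := (hcont.tendsto 0).mono_left (nhdsWithin_le_nhds (s := Set.Ioi (0:ℝ)))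
      simpa using this
  · apply tendsto_pi_nhds.mpr
    intro i
    rw [tendsto_pi_nhds]
    intro j
    have hsub : Tendsto (fun lam : ℝ =>
        (M₂ * (S + lam • (1 : Matrix (Fin n) (Fin n) ℝ))⁻¹ * M₁ᵀ) i j - (M₂ * P) i j)
        (nhdsWithin 0 (Set.Ioi 0)) (nhds 0) := by
      apply squeeze_zero_norm' (a := fun lam => C * Real.sqrt lam)
      · filter_upwards [self_mem_nhdsWithin] with lam hlam
        rw [Real.norm_eq_abs]
        exact (master lam hlam).2 i j
      · have hcont : Continuous fun lam : ℝ => C * Real.sqrt lam :=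
          continuous_const.mul Real.continuous_sqrt
        have := (hcont.tendsto 0).mono_left (nhdsWithin_le_nhds (s := Set.Ioi (0:ℝ)))
        simpa using this
    have := hsub.add (tendsto_const_nhds (x := (M₂ * P) i j))
    simpa using this
end

section
/- Let O ∈ ℝ^{r×n} have rank n (full column rank), let A ∈ ℝ^{n×n}, and set O⁺ = (OᵀO)⁻¹Oᵀ. Then for all λ ∈ ℝ: det(λ I_r − O A O⁺) = λ^{r−n} · det(λ I_n − A). Consequently, if additionally C ∈ ℝ^{n×c} has rank n (full row rank) and (OC)⁺ = Cᵀ(CCᵀ)⁻¹(OᵀO)⁻¹Oᵀ denotes the Moore–Penrose pseudoinverse of OC, then det(λ I_r − (O A C)(OC)⁺) = λ^{r−n} · det(λ I_n − A), so the nonzero eigenvalues of (O A C)(OC)⁺ coincide (with multiplicity) with the nonzero eigenvalues of A. -/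
open Matrix Filter

lemma aux_isUnit_of_rank_eq {n : ℕ} (S : Matrix (Fin n) (Fin n) ℝ)
    (h : S.rank = n) : IsUnit S.det := by
  rw [← isUnit_iff_isUnit_det, ← mulVec_surjective_iff_isUnit]
  have : LinearMap.range S.mulVecLin = ⊤ := by
    apply Submodule.eq_top_of_finrank_eq
    rw [← Matrix.rank, h]
    simp
  intro v
  obtain ⟨y, hy⟩ := LinearMap.range_eq_top.mp this v
  exact ⟨y, hy⟩

lemma aux_key {r n : ℕ} (h : n ≤ r) (M : Matrix (Fin r) (Fin n) ℝ)
    (N : Matrix (Fin n) (Fin r) ℝ) (lam : ℝ) :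
    (lam • (1 : Matrix (Fin r) (Fin r) ℝ) - M * N).det =
      lam ^ (r - n) * (lam • (1 : Matrix (Fin n) (Fin n) ℝ) - N * M).det := by
  have hf : Continuous fun lam : ℝ =>
      (lam • (1 : Matrix (Fin r) (Fin r) ℝ) - M * N).det :=
    Continuous.matrix_det ((continuous_id.smul continuous_const).sub continuous_const)
  have hg : Continuous fun lam : ℝ =>
      lam ^ (r - n) * (lam • (1 : Matrix (Fin n) (Fin n) ℝ) - N * M).det :=
    (continuous_pow _).mul
      (Continuous.matrix_det ((continuous_id.smul continuous_const).sub continuous_const))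
  have heq : Set.EqOn _ _ ({0}ᶜ : Set ℝ) := fun l (hl : l ≠ 0) => by
    show (l • (1 : Matrix (Fin r) (Fin r) ℝ) - M * N).det =
      l ^ (r - n) * (l • (1 : Matrix (Fin n) (Fin n) ℝ) - N * M).det
    have e1 : l • (1 : Matrix (Fin r) (Fin r) ℝ) - M * N =
        l • ((1 : Matrix (Fin r) (Fin r) ℝ) - M * (l⁻¹ • N)) := by
      rw [smul_sub, Matrix.mul_smul, smul_smul, mul_inv_cancel₀ hl, one_smul]
    have e2 : (1 : Matrix (Fin n) (Fin n) ℝ) - (l⁻¹ • N) * M =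
        l⁻¹ • (l • (1 : Matrix (Fin n) (Fin n) ℝ) - N * M) := by
      rw [smul_sub, smul_smul, inv_mul_cancel₀ hl, one_smul, Matrix.smul_mul]
    rw [e1, det_smul, det_one_sub_mul_comm, e2, det_smul]
    simp only [Fintype.card_fin]
    field_simp
    have hp : l ^ r = l ^ (r - n) * l ^ n := by rw [← pow_add, Nat.sub_add_cancel h]
    rw [hp, one_div, inv_pow]
    calc _ = (l • (1 : Matrix (Fin n) (Fin n) ℝ) - N * M).det * l ^ (r - n) *
          (l ^ n * (l ^ n)⁻¹) := by ring
      _ = _ := by rw [mul_inv_cancel₀ (pow_ne_zero n hl), mul_one]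
  have := Continuous.ext_on (dense_compl_singleton (0:ℝ)) hf hg heq
  exact congrFun this lam

/-- for `O` of full column rank with `O⁺ = (OᵀO)⁻¹Oᵀ`,
`det(λI_r − O A O⁺) = λ^{r−n} det(λI_n − A)`; consequently, for `C` of full row rank and
`(OC)⁺ = Cᵀ(CCᵀ)⁻¹(OᵀO)⁻¹Oᵀ`, also `det(λI_r − (OAC)(OC)⁺) = λ^{r−n} det(λI_n − A)`. -/
theorem stmt8 {r n : ℕ}
    (O : Matrix (Fin r) (Fin n) ℝ) (hO : O.rank = n)
    (A : Matrix (Fin n) (Fin n) ℝ) :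
    (∀ lam : ℝ,
      (lam • (1 : Matrix (Fin r) (Fin r) ℝ) - O * A * ((Oᵀ * O)⁻¹ * Oᵀ)).det =
        lam ^ (r - n) * (lam • (1 : Matrix (Fin n) (Fin n) ℝ) - A).det) ∧
    (∀ {c : ℕ} (C : Matrix (Fin n) (Fin c) ℝ), C.rank = n →
      ∀ lam : ℝ,
        (lam • (1 : Matrix (Fin r) (Fin r) ℝ) -
            (O * A * C) * (Cᵀ * (C * Cᵀ)⁻¹ * ((Oᵀ * O)⁻¹ * Oᵀ))).det =
          lam ^ (r - n) * (lam • (1 : Matrix (Fin n) (Fin n) ℝ) - A).det) := by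
  have hnr : n ≤ r := hO ▸ O.rank_le_height
  have hOO : IsUnit (Oᵀ * O).det :=
    aux_isUnit_of_rank_eq _ (by rw [O.rank_transpose_mul_self, hO])
  have hNM : A * ((Oᵀ * O)⁻¹ * Oᵀ) * O = A := by
    rw [Matrix.mul_assoc A, Matrix.mul_assoc (Oᵀ * O)⁻¹, nonsing_inv_mul _ hOO,
      Matrix.mul_one]
  have h1 : ∀ lam : ℝ,
      (lam • (1 : Matrix (Fin r) (Fin r) ℝ) - O * A * ((Oᵀ * O)⁻¹ * Oᵀ)).det =
        lam ^ (r - n) * (lam • (1 : Matrix (Fin n) (Fin n) ℝ) - A).det := by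
    intro lam
    have := aux_key hnr O (A * ((Oᵀ * O)⁻¹ * Oᵀ)) lam
    rwa [← Matrix.mul_assoc, hNM] at this
  refine ⟨h1, ?_⟩
  intro c C hC lam
  have hCC : IsUnit (C * Cᵀ).det :=
    aux_isUnit_of_rank_eq _ (by rw [C.rank_self_mul_transpose, hC])
  have hC1 : ∀ X : Matrix (Fin n) (Fin r) ℝ, C * (Cᵀ * ((C * Cᵀ)⁻¹ * X)) = X := fun X => by
    rw [← Matrix.mul_assoc Cᵀ, ← Matrix.mul_assoc, ← Matrix.mul_assoc C,
      mul_nonsing_inv _ hCC, Matrix.one_mul]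
  have hE : (O * A * C) * (Cᵀ * (C * Cᵀ)⁻¹ * ((Oᵀ * O)⁻¹ * Oᵀ)) =
      O * A * ((Oᵀ * O)⁻¹ * Oᵀ) := by
    simp only [Matrix.mul_assoc]
    rw [hC1]
  rw [hE]
  exact h1 lam
end
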